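/- arXiv:2006.06344 — 6 statements merged into one kernel-verified Lean document; each statement's English description precedes it below -/
import Mathlib

section
/- Let $M \geq s$ be positive integers and $a_1 \geq a_2 \geq \cdots \geq a_M \geq 0$ be reals with $\sum_{i=1}^s a_i \geq \sum_{i=s+1}^M a_i$. Then for every real $\alpha \geq 1$, $\sum_{j=s+1}^M a_j^\alpha \leq \sum_{i=1}^s a_i^\alpha$. -/
open Finset

lemma rpow_aux {x y α : ℝ} (hx : 0 ≤ x) (hxy : x ≤ y) (hα : 1 ≤ α) :
    x ^ α ≤ y ^ (α - 1) * x := by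
  rcases eq_or_lt_of_le hx with h | h
  · rw [← h, Real.zero_rpow (by linarith), mul_zero]
  · rw [show x ^ α = x ^ (α - 1) * x by
      rw [← Real.rpow_add_one h.ne' (α - 1), sub_add_cancel]]
    exact mul_le_mul_of_nonneg_right
      (Real.rpow_le_rpow hx hxy (by linarith)) hx

theorem power_sum_domination (M s : ℕ) (hs : 0 < s) (hsM : s ≤ M) (a : ℕ → ℝ)
    (hmono : ∀ i j, 1 ≤ i → i ≤ j → j ≤ M → a j ≤ a i)
    (hnonneg : ∀ i, 1 ≤ i → i ≤ M → 0 ≤ a i)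
    (hsum : ∑ i ∈ Finset.Icc (s + 1) M, a i ≤ ∑ i ∈ Finset.Icc 1 s, a i)
    (α : ℝ) (hα : 1 ≤ α) :
    ∑ j ∈ Finset.Icc (s + 1) M, a j ^ α ≤ ∑ i ∈ Finset.Icc 1 s, a i ^ α := by
  set c := a s ^ (α - 1) with hc
  have has : 0 ≤ a s := hnonneg s hs hsM
  have hc0 : 0 ≤ c := Real.rpow_nonneg has _
  have h1 : ∑ j ∈ Finset.Icc (s + 1) M, a j ^ α ≤ c * ∑ j ∈ Finset.Icc (s + 1) M, a j := by
    rw [Finset.mul_sum]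
    refine Finset.sum_le_sum fun j hj => ?_
    simp only [Finset.mem_Icc] at hj
    exact rpow_aux (hnonneg j (by omega) hj.2) (hmono s j hs (by omega) hj.2) hα
  have h2 : c * ∑ i ∈ Finset.Icc 1 s, a i ≤ ∑ i ∈ Finset.Icc 1 s, a i ^ α := by
    rw [Finset.mul_sum]
    refine Finset.sum_le_sum fun i hi => ?_
    simp only [Finset.mem_Icc] at hi
    have hi0 : 0 ≤ a i := hnonneg i hi.1 (by omega)
    have hsi : a s ≤ a i := hmono i s hi.1 hi.2 hsM
    calc c * a i ≤ a i ^ (α - 1) * a i :=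
          mul_le_mul_of_nonneg_right (Real.rpow_le_rpow has hsi (by linarith)) hi0
      _ = a i ^ α := by
          rcases eq_or_lt_of_le hi0 with h | h
          · rw [← h, Real.zero_rpow (by linarith : α ≠ 0), mul_zero]
          · rw [← Real.rpow_add_one h.ne' (α - 1), sub_add_cancel]
  calc ∑ j ∈ Finset.Icc (s + 1) M, a j ^ α ≤ c * ∑ j ∈ Finset.Icc (s + 1) M, a j := h1
    _ ≤ c * ∑ i ∈ Finset.Icc 1 s, a i := mul_le_mul_of_nonneg_left hsum hc0
    _ ≤ ∑ i ∈ Finset.Icc 1 s, a i ^ α := h2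
end

section
/- Let $M \geq s$ be positive integers, $a_1 \geq a_2 \geq \cdots \geq a_M \geq 0$, $\lambda \geq 0$, and suppose $\sum_{i=1}^s a_i + \lambda \geq \sum_{i=s+1}^M a_i$. Then for all $\alpha \geq 1$, $\sum_{j=s+1}^M a_j^\alpha \leq s\left(\left(\frac{\sum_{i=1}^s a_i^\alpha}{s}\right)^{1/\alpha} + \frac{\lambda}{s}\right)^\alpha$. -/
open Finset

theorem power_sum_domination_with_slack (M s : ℕ) (hs : 0 < s) (hsM : s ≤ M) (a : ℕ → ℝ)
    (hmono : ∀ i j, 1 ≤ i → i ≤ j → j ≤ M → a j ≤ a i)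
    (hnonneg : ∀ i, 1 ≤ i → i ≤ M → 0 ≤ a i)
    (lam : ℝ) (hlam : 0 ≤ lam)
    (hsum : ∑ i ∈ Finset.Icc (s + 1) M, a i ≤ (∑ i ∈ Finset.Icc 1 s, a i) + lam)
    (α : ℝ) (hα : 1 ≤ α) :
    ∑ j ∈ Finset.Icc (s + 1) M, a j ^ α ≤
      (s : ℝ) * (((∑ i ∈ Finset.Icc 1 s, a i ^ α) / s) ^ (1 / α) + lam / s) ^ α := by
  have hαpos : (0:ℝ) < α := lt_of_lt_of_le one_pos hα
  have hspos : (0:ℝ) < (s:ℝ) := by exact_mod_cast hs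
  set A := ∑ i ∈ Finset.Icc 1 s, a i with hA
  set P := ∑ i ∈ Finset.Icc 1 s, a i ^ α with hP
  set B := (P / s) ^ (1 / α) with hB
  set t := B + lam / s with ht
  have hsmem : s ∈ Finset.Icc 1 s := Finset.mem_Icc.2 ⟨hs, le_refl s⟩
  have has : 0 ≤ a s := hnonneg s hs hsM
  have hPnn : 0 ≤ P := Finset.sum_nonneg fun i hi => by
    have := Finset.mem_Icc.1 hi
    exact Real.rpow_nonneg (hnonneg i this.1 (le_trans this.2 hsM)) α
  have hBnn : 0 ≤ B := Real.rpow_nonneg (by positivity) _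
  have htnn : 0 ≤ t := by positivity
  -- a s ≤ B
  have hasB : a s ≤ B := by
    have h1 : a s ^ α * s ≤ P := by
      have : ∀ i ∈ Finset.Icc 1 s, a s ^ α ≤ a i ^ α := by
        intro i hi
        have hi' := Finset.mem_Icc.1 hi
        exact Real.rpow_le_rpow has (hmono i s hi'.1 hi'.2 hsM) (le_of_lt hαpos)
      calc a s ^ α * s = ∑ _i ∈ Finset.Icc 1 s, a s ^ α := by
            simp [Finset.sum_const, Nat.card_Icc, mul_comm]
        _ ≤ P := Finset.sum_le_sum this
    have h2 : a s ^ α ≤ P / s := (le_div_iff₀ hspos).2 h1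
    have h3 := Real.rpow_le_rpow (Real.rpow_nonneg has α) h2 (le_of_lt (by positivity : (0:ℝ) < 1/α))
    rwa [← Real.rpow_mul has, mul_one_div, div_self (ne_of_gt hαpos), Real.rpow_one] at h3
  have hast : a s ≤ t := le_trans hasB (le_add_of_nonneg_right (by positivity))
  -- A ≤ s * B (power mean)
  have hAB : A ≤ (s:ℝ) * B := by
    have := Real.arith_mean_le_rpow_mean (Finset.Icc 1 s) (fun _ => 1 / (s:ℝ)) a
      (fun i _ => by positivity)
      (by simp [Finset.sum_const, Nat.card_Icc]; field_simp)
      (fun i hi => by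
        have := Finset.mem_Icc.1 hi
        exact hnonneg i this.1 (le_trans this.2 hsM)) hα
    have e1 : ∑ i ∈ Finset.Icc 1 s, (1 / (s:ℝ)) * a i = A / s := by
      rw [← Finset.mul_sum, ← hA]; ring
    have e2 : ∑ i ∈ Finset.Icc 1 s, (1 / (s:ℝ)) * a i ^ α = P / s := by
      rw [← Finset.mul_sum, ← hP]; ring
    rw [e1, e2] at this
    calc A = (A / s) * s := by field_simp
      _ ≤ B * s := by exact mul_le_mul_of_nonneg_right (by rwa [hB]) (le_of_lt hspos)
      _ = (s:ℝ) * B := mul_comm _ _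
  -- tail power sum bound
  have hstep : ∀ j ∈ Finset.Icc (s+1) M, a j ^ α ≤ t ^ (α - 1) * a j := by
    intro j hj
    have hj' := Finset.mem_Icc.1 hj
    have hj1 : 1 ≤ j := le_trans (Nat.le_add_left 1 s) hj'.1
    have hajnn : 0 ≤ a j := hnonneg j hj1 hj'.2
    have haj : a j ≤ a s := hmono s j hs (le_of_lt hj'.1) hj'.2
    have h1 : a j ^ (α - 1) ≤ t ^ (α - 1) :=
      Real.rpow_le_rpow hajnn (le_trans haj hast) (by linarith)
    calc a j ^ α = a j ^ (α - 1) * a j := by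
          have h := Real.rpow_add_of_nonneg hajnn (by linarith : (0:ℝ) ≤ α - 1) zero_le_one
          rw [Real.rpow_one, show α - 1 + 1 = α by ring] at h
          exact h
      _ ≤ t ^ (α - 1) * a j := mul_le_mul_of_nonneg_right h1 hajnn
  calc ∑ j ∈ Finset.Icc (s+1) M, a j ^ α ≤ ∑ j ∈ Finset.Icc (s+1) M, t ^ (α - 1) * a j :=
        Finset.sum_le_sum hstep
    _ = t ^ (α - 1) * ∑ j ∈ Finset.Icc (s+1) M, a j := by rw [Finset.mul_sum]
    _ ≤ t ^ (α - 1) * (A + lam) := by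
        apply mul_le_mul_of_nonneg_left hsum (Real.rpow_nonneg htnn _)
    _ ≤ t ^ (α - 1) * ((s:ℝ) * t) := by
        apply mul_le_mul_of_nonneg_left _ (Real.rpow_nonneg htnn _)
        have : (s:ℝ) * t = (s:ℝ) * B + lam := by
          rw [ht, mul_add]; field_simp
        rw [this]; linarith
    _ = (s:ℝ) * t ^ α := by
        have h := Real.rpow_add_of_nonneg htnn (by linarith : (0:ℝ) ≤ α - 1) zero_le_one
        rw [Real.rpow_one, show α - 1 + 1 = α by ring] at h
        rw [h]; ring
end

section
/- Fix $0 < p \leq 1$, a positive integer $s$, and $\alpha > 0$. Let $x \in \mathbb{R}^N$ be partitioned into $M$ blocks $x[1], \ldots, x[M]$. If $\sum_{i=1}^M \|x[i]\|_2^p \leq s\alpha^p$ and $\max_i \|x[i]\|_2 \leq \alpha$, then $x$ can be written as a finite convex combination $x = \sum_i \lambda_i u_i$ where each $u_i \in \mathbb{R}^N$ has at most $s$ nonzero blocks, $\lambda_i > 0$, $\sum_i \lambda_i = 1$, and moreover $\sum_i \lambda_i \|u_i\|_2^2 \leq \alpha^p \sum_{i=1}^M \|x[i]\|_2^{2-p}$.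 -/
open Finset


lemma sum_ite_mem_single {M : ℕ} (S : Finset (Fin M)) (c : ℝ) (j : Fin M) :
    (∑ T : Finset (Fin M), if j ∈ T then (if T = S then c else 0) else 0)
      = if j ∈ S then c else 0 := by
  have h : ∀ T : Finset (Fin M),
      (if j ∈ T then (if T = S then c else 0) else 0)
      = (if T = S then (if j ∈ S then c else 0) else 0) := by
    intro T
    by_cases hT : T = S
    · subst hT; simp
    · simp [hT]
  rw [Finset.sum_congr rfl fun T _ => h T, Finset.sum_ite_eq' Finset.univ]
  simp

lemma hyp_main (M s : ℕ) :
    ∀ (n : ℕ) (w : Fin M → ℝ),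
      (Finset.univ.filter fun j => w j ≠ 0 ∧ w j ≠ 1).card ≤ n →
      (∀ j, 0 ≤ w j) → (∀ j, w j ≤ 1) → (∑ j, w j ≤ (s : ℝ)) →
      ∃ lam : Finset (Fin M) → ℝ,
        (∀ S, 0 ≤ lam S) ∧ (∑ S, lam S = 1) ∧
        (∀ S, lam S ≠ 0 → S.card ≤ s) ∧
        (∀ j, (∑ S, if j ∈ S then lam S else 0) = w j) := by
  intro n
  induction n with
  | zero =>
    intro w hcard h0 h1 hsum
    have hint : ∀ j, w j = 0 ∨ w j = 1 := by
      intro j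
      by_contra h
      push_neg at h
      have hj : j ∈ Finset.univ.filter fun j => w j ≠ 0 ∧ w j ≠ 1 := by
        simp [h.1, h.2]
      have := Finset.card_pos.mpr ⟨j, hj⟩
      omega
    set S : Finset (Fin M) := Finset.univ.filter fun j => w j = 1 with hS
    refine ⟨fun T => if T = S then 1 else 0, ?_, ?_, ?_, ?_⟩
    · intro T; dsimp only; split <;> norm_num
    · simp
    · intro T hT
      have hTS : T = S := by by_contra h; simp [h] at hT
      subst hTS
      have hw : ∀ j, w j = if j ∈ S then (1:ℝ) else 0 := by
        intro j
        rcases hint j with h | h <;> simp [hS, h]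
      have : ∑ j, w j = (S.card : ℝ) := by
        rw [Finset.sum_congr rfl fun j _ => hw j]
        simp
      rw [this] at hsum
      exact_mod_cast hsum
    · intro j
      rw [sum_ite_mem_single S 1 j]
      rcases hint j with h | h <;> simp [hS, h]
  | succ n ih =>
    intro w hcard h0 h1 hsum
    by_cases hn : (Finset.univ.filter fun j => w j ≠ 0 ∧ w j ≠ 1).card ≤ n
    · exact ih w hn h0 h1 hsum
    set Fr := Finset.univ.filter fun j => w j ≠ 0 ∧ w j ≠ 1 with hFr
    have hFcard : Fr.card = n + 1 := by omega
    by_cases hone : Fr.card = 1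
    · -- exactly one fractional coordinate
      obtain ⟨j0, hj0⟩ := Finset.card_eq_one.mp hone
      have hj0mem : j0 ∈ Fr := by rw [hj0]; exact Finset.mem_singleton_self j0
      have hj0frac : w j0 ≠ 0 ∧ w j0 ≠ 1 := by
        simpa [hFr] using hj0mem
      have hint : ∀ j, j ≠ j0 → w j = 0 ∨ w j = 1 := by
        intro j hj
        by_contra h
        push_neg at h
        have : j ∈ Fr := by simp [hFr, h.1, h.2]
        rw [hj0] at this
        exact hj (Finset.mem_singleton.mp this)
      set t := w j0 with ht
      have ht0 : 0 < t := lt_of_le_of_ne (h0 j0) (Ne.symm hj0frac.1)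
      have ht1 : t < 1 := lt_of_le_of_ne (h1 j0) hj0frac.2
      set S0 : Finset (Fin M) := Finset.univ.filter fun j => w j = 1 with hS0
      have hj0S0 : j0 ∉ S0 := by simp [hS0, hj0frac.2]; exact hj0frac.2
      have hne : insert j0 S0 ≠ S0 := by
        intro h; exact hj0S0 (h ▸ Finset.mem_insert_self j0 S0)
      have hsum' : ∑ j, w j = (S0.card : ℝ) + t := by
        have hw : ∀ j, w j = (if j ∈ S0 then (1:ℝ) else 0) + (if j = j0 then t else 0) := by
          intro j
          by_cases hj : j = j0
          · subst hj; simp [hj0S0, ht]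
          · rcases hint j hj with h | h <;> simp [hS0, h, hj]
        rw [Finset.sum_congr rfl fun j _ => hw j, Finset.sum_add_distrib]
        simp
      have hcardS0 : (S0.card : ℝ) + t ≤ (s : ℝ) := hsum' ▸ hsum
      have hcards : S0.card + 1 ≤ s := by
        have : (S0.card : ℝ) < (s : ℝ) := by linarith
        exact_mod_cast Nat.add_one_le_iff.mpr (by exact_mod_cast this)
      refine ⟨fun T => (if T = insert j0 S0 then t else 0) + (if T = S0 then 1 - t else 0),
        ?_, ?_, ?_, ?_⟩
      · intro T
        dsimp only
        have ha : (0:ℝ) ≤ t := le_of_lt ht0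
        have hb : (0:ℝ) ≤ 1 - t := by linarith
        split_ifs <;> simp <;> linarith
      · rw [Finset.sum_add_distrib, Finset.sum_ite_eq' Finset.univ,
          Finset.sum_ite_eq' Finset.univ]
        simp only [Finset.mem_univ, if_true]
        ring
      · intro T hT
        dsimp only at hT
        by_cases h1' : T = insert j0 S0
        · subst h1'
          calc (insert j0 S0).card ≤ S0.card + 1 := Finset.card_insert_le _ _
            _ ≤ s := hcards
        · by_cases h2' : T = S0
          · subst h2'; omega
          · simp [h1', h2'] at hT
      · intro j
        have key : ∀ T : Finset (Fin M),
            (if j ∈ T then ((if T = insert j0 S0 then t else 0) + (if T = S0 then 1 - t else 0)) else 0)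
            = (if j ∈ T then (if T = insert j0 S0 then t else 0) else 0)
              + (if j ∈ T then (if T = S0 then 1 - t else 0) else 0) := by
          intro T; split_ifs <;> simp
        rw [Finset.sum_congr rfl fun T _ => key T, Finset.sum_add_distrib,
          sum_ite_mem_single, sum_ite_mem_single]
        by_cases hj : j = j0
        · subst hj; simp [hj0S0, ht]
        · rcases hint j hj with h | h
          · have : j ∉ S0 := by simp [hS0, h]
            simp [this, hj, h]
          · have : j ∈ S0 := by simp [hS0, h]
            simp [this, h]
    · -- at least two fractional coordinates
      have h2le : 2 ≤ Fr.card := by omega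
      obtain ⟨j1, hj1, j2, hj2, hj12⟩ := Finset.one_lt_card.mp h2le
      have hf1 : w j1 ≠ 0 ∧ w j1 ≠ 1 := by simpa [hFr] using hj1
      have hf2 : w j2 ≠ 0 ∧ w j2 ≠ 1 := by simpa [hFr] using hj2
      have hw1lt : w j1 < 1 := lt_of_le_of_ne (h1 j1) hf1.2
      have hw1gt : 0 < w j1 := lt_of_le_of_ne (h0 j1) (Ne.symm hf1.1)
      have hw2lt : w j2 < 1 := lt_of_le_of_ne (h1 j2) hf2.2
      have hw2gt : 0 < w j2 := lt_of_le_of_ne (h0 j2) (Ne.symm hf2.1)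
      set ε := min (1 - w j1) (w j2) with hε
      set δ := min (w j1) (1 - w j2) with hδ
      have hεpos : 0 < ε := lt_min (by linarith) hw2gt
      have hδpos : 0 < δ := lt_min hw1gt (by linarith)
      set w1 : Fin M → ℝ := fun j => if j = j1 then w j1 + ε else if j = j2 then w j2 - ε else w j with hw1
      set w2 : Fin M → ℝ := fun j => if j = j1 then w j1 - δ else if j = j2 then w j2 + δ else w j with hw2
      have hεle1 : ε ≤ 1 - w j1 := min_le_left _ _
      have hεle2 : ε ≤ w j2 := min_le_right _ _
      have hδle1 : δ ≤ w j1 := min_le_left _ _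
      have hδle2 : δ ≤ 1 - w j2 := min_le_right _ _
      have h0w1 : ∀ j, 0 ≤ w1 j := by
        intro j; simp only [hw1]
        split_ifs with ha hb
        · linarith
        · linarith
        · exact h0 j
      have h1w1 : ∀ j, w1 j ≤ 1 := by
        intro j; simp only [hw1]
        split_ifs with ha hb
        · linarith
        · linarith [h0 j2]
        · exact h1 j
      have h0w2 : ∀ j, 0 ≤ w2 j := by
        intro j; simp only [hw2]
        split_ifs with ha hb
        · linarith
        · linarith
        · exact h0 j
      have h1w2 : ∀ j, w2 j ≤ 1 := by
        intro j; simp only [hw2]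
        split_ifs with ha hb
        · linarith [h1 j1]
        · linarith
        · exact h1 j
      have hsplit : ∀ (c : ℝ), ∀ j, (if j = j1 then w j1 + c else if j = j2 then w j2 - c else w j)
          = w j + ((if j = j1 then c else 0) - (if j = j2 then c else 0)) := by
        intro c j
        by_cases ha : j = j1
        · subst ha
          rw [if_pos rfl, if_pos rfl, if_neg hj12]
          ring
        · by_cases hb : j = j2
          · subst hb
            rw [if_neg ha, if_pos rfl, if_neg ha, if_pos rfl]
            ring
          · rw [if_neg ha, if_neg hb, if_neg ha, if_neg hb]
            ring
      have hsum1 : ∑ j, w1 j = ∑ j, w j := by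
        simp only [hw1]
        rw [Finset.sum_congr rfl fun j _ => hsplit ε j, Finset.sum_add_distrib,
          Finset.sum_sub_distrib, Finset.sum_ite_eq' Finset.univ, Finset.sum_ite_eq' Finset.univ]
        simp
      have hsum2 : ∑ j, w2 j = ∑ j, w j := by
        have : ∀ j, w2 j = (if j = j1 then w j1 + (-δ) else if j = j2 then w j2 - (-δ) else w j) := by
          intro j; simp only [hw2]; split_ifs <;> ring
        rw [Finset.sum_congr rfl fun j _ => this j,
          Finset.sum_congr rfl fun j _ => hsplit (-δ) j, Finset.sum_add_distrib,
          Finset.sum_sub_distrib, Finset.sum_ite_eq' Finset.univ, Finset.sum_ite_eq' Finset.univ]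
        simp
      -- fractional sets shrink
      have hsub : ∀ (v : Fin M → ℝ), (∀ j, j ≠ j1 → j ≠ j2 → v j = w j) →
          ∀ j ∈ (Finset.univ.filter fun j => v j ≠ 0 ∧ v j ≠ 1), j ≠ j1 → j ≠ j2 → j ∈ Fr := by
        intro v hv j hj ha hb
        simp only [Finset.mem_filter, Finset.mem_univ, true_and] at hj
        rw [hv j ha hb] at hj
        simp [hFr, hj.1, hj.2]
      have hmem12 : ∀ (v : Fin M → ℝ), (∀ j, j ≠ j1 → j ≠ j2 → v j = w j) →
          (Finset.univ.filter fun j => v j ≠ 0 ∧ v j ≠ 1) ⊆ insert j1 (insert j2 Fr) := by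
        intro v hv j hj
        by_cases ha : j = j1
        · simp [ha]
        · by_cases hb : j = j2
          · simp [hb]
          · exact Finset.mem_insert_of_mem (Finset.mem_insert_of_mem (hsub v hv j hj ha hb))
      have hcard1 : (Finset.univ.filter fun j => w1 j ≠ 0 ∧ w1 j ≠ 1).card ≤ n := by
        have hvother : ∀ j, j ≠ j1 → j ≠ j2 → w1 j = w j := by
          intro j ha hb; simp [hw1, ha, hb]
        rcases min_cases (1 - w j1) (w j2) with ⟨he, _⟩ | ⟨he, _⟩
        · -- w1 j1 = 1, remove j1
          have hval : w j1 + ε = 1 := by rw [hε, he]; ring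
          have hnot : j1 ∉ (Finset.univ.filter fun j => w1 j ≠ 0 ∧ w1 j ≠ 1) := by
            simp [hw1, hval]
          have hss : (Finset.univ.filter fun j => w1 j ≠ 0 ∧ w1 j ≠ 1) ⊆ Fr.erase j1 := by
            intro j hj
            refine Finset.mem_erase.mpr ⟨fun h => hnot (h ▸ hj), ?_⟩
            by_cases hb : j = j2
            · exact hb ▸ hj2
            · exact hsub w1 hvother j hj (fun h => hnot (h ▸ hj)) hb
          calc _ ≤ (Fr.erase j1).card := Finset.card_le_card hss
            _ = Fr.card - 1 := Finset.card_erase_of_mem hj1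
            _ ≤ n := by omega
        · -- w1 j2 = 0, remove j2
          have hval : w j2 - ε = 0 := by rw [hε, he]; ring
          have hnot : j2 ∉ (Finset.univ.filter fun j => w1 j ≠ 0 ∧ w1 j ≠ 1) := by
            simp [hw1, hval, Ne.symm hj12]
          have hss : (Finset.univ.filter fun j => w1 j ≠ 0 ∧ w1 j ≠ 1) ⊆ Fr.erase j2 := by
            intro j hj
            refine Finset.mem_erase.mpr ⟨fun h => hnot (h ▸ hj), ?_⟩
            by_cases ha : j = j1
            · exact ha ▸ hj1
            · exact hsub w1 hvother j hj ha (fun h => hnot (h ▸ hj))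
          calc _ ≤ (Fr.erase j2).card := Finset.card_le_card hss
            _ = Fr.card - 1 := Finset.card_erase_of_mem hj2
            _ ≤ n := by omega
      have hcard2 : (Finset.univ.filter fun j => w2 j ≠ 0 ∧ w2 j ≠ 1).card ≤ n := by
        have hvother : ∀ j, j ≠ j1 → j ≠ j2 → w2 j = w j := by
          intro j ha hb; simp [hw2, ha, hb]
        rcases min_cases (w j1) (1 - w j2) with ⟨he, _⟩ | ⟨he, _⟩
        · -- w2 j1 = 0, remove j1
          have hval : w j1 - δ = 0 := by rw [hδ, he]; ring
          have hnot : j1 ∉ (Finset.univ.filter fun j => w2 j ≠ 0 ∧ w2 j ≠ 1) := by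
            simp [hw2, hval]
          have hss : (Finset.univ.filter fun j => w2 j ≠ 0 ∧ w2 j ≠ 1) ⊆ Fr.erase j1 := by
            intro j hj
            refine Finset.mem_erase.mpr ⟨fun h => hnot (h ▸ hj), ?_⟩
            by_cases hb : j = j2
            · exact hb ▸ hj2
            · exact hsub w2 hvother j hj (fun h => hnot (h ▸ hj)) hb
          calc _ ≤ (Fr.erase j1).card := Finset.card_le_card hss
            _ = Fr.card - 1 := Finset.card_erase_of_mem hj1
            _ ≤ n := by omega
        · -- w2 j2 = 1, remove j2
          have hval : w j2 + δ = 1 := by rw [hδ, he]; ring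
          have hnot : j2 ∉ (Finset.univ.filter fun j => w2 j ≠ 0 ∧ w2 j ≠ 1) := by
            simp [hw2, hval, Ne.symm hj12]
          have hss : (Finset.univ.filter fun j => w2 j ≠ 0 ∧ w2 j ≠ 1) ⊆ Fr.erase j2 := by
            intro j hj
            refine Finset.mem_erase.mpr ⟨fun h => hnot (h ▸ hj), ?_⟩
            by_cases ha : j = j1
            · exact ha ▸ hj1
            · exact hsub w2 hvother j hj ha (fun h => hnot (h ▸ hj))
          calc _ ≤ (Fr.erase j2).card := Finset.card_le_card hss
            _ = Fr.card - 1 := Finset.card_erase_of_mem hj2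
            _ ≤ n := by omega
      obtain ⟨lam1, hl1nn, hl1sum, hl1card, hl1cov⟩ :=
        ih w1 hcard1 h0w1 h1w1 (by rw [hsum1]; exact hsum)
      obtain ⟨lam2, hl2nn, hl2sum, hl2card, hl2cov⟩ :=
        ih w2 hcard2 h0w2 h1w2 (by rw [hsum2]; exact hsum)
      set c1 := δ / (ε + δ) with hc1
      set c2 := ε / (ε + δ) with hc2
      have hεδ : 0 < ε + δ := by linarith
      have hc1pos : 0 ≤ c1 := by positivity
      have hc2pos : 0 ≤ c2 := by positivity
      have hc12 : c1 + c2 = 1 := by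
        have hcomm : δ + ε = ε + δ := by ring
        rw [hc1, hc2, ← add_div, hcomm, div_self hεδ.ne']
      have hconv : ∀ j, c1 * w1 j + c2 * w2 j = w j := by
        intro j
        simp only [hw1, hw2, hc1, hc2]
        by_cases ha : j = j1
        · subst ha; simp only [if_pos rfl, ↓reduceIte]; field_simp; ring
        · by_cases hb : j = j2
          · subst hb; simp only [if_neg ha, if_pos rfl, ↓reduceIte]; field_simp; ring
          · simp only [if_neg ha, if_neg hb]; field_simp; ring
      refine ⟨fun T => c1 * lam1 T + c2 * lam2 T, ?_, ?_, ?_, ?_⟩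
      · intro T; dsimp only; have := hl1nn T; have := hl2nn T; positivity
      · rw [Finset.sum_add_distrib, ← Finset.mul_sum, ← Finset.mul_sum, hl1sum, hl2sum]
        simpa using hc12
      · intro T hT
        dsimp only at hT
        by_cases h1' : lam1 T ≠ 0
        · exact hl1card T h1'
        · push_neg at h1'
          apply hl2card T
          intro h2'
          exact hT (by rw [h1', h2']; ring)
      · intro j
        have key : ∀ T : Finset (Fin M),
            (if j ∈ T then c1 * lam1 T + c2 * lam2 T else 0)
            = c1 * (if j ∈ T then lam1 T else 0) + c2 * (if j ∈ T then lam2 T else 0) := by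
          intro T; split_ifs <;> simp
        rw [Finset.sum_congr rfl fun T _ => key T, Finset.sum_add_distrib,
          ← Finset.mul_sum, ← Finset.mul_sum, hl1cov, hl2cov]
        exact hconv j


/-- Block `l_p`-polytope decomposition into convex combination of block `s`-sparse vectors. -/
theorem block_lp_polytope_decomposition (M d s : ℕ) (hs : 0 < s) (p α : ℝ)
    (hp0 : 0 < p) (hp1 : p ≤ 1) (hα : 0 < α)
    (x : Fin M → EuclideanSpace ℝ (Fin d))
    (h1 : ∑ i, ‖x i‖ ^ p ≤ (s : ℝ) * α ^ p)
    (h2 : ∀ i, ‖x i‖ ≤ α) :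
    ∃ (K : ℕ) (lam : Fin K → ℝ) (u : Fin K → (Fin M → EuclideanSpace ℝ (Fin d))),
      (∀ i, 0 < lam i) ∧ (∑ i, lam i = 1) ∧
      (∀ i, {j | u i j ≠ 0}.ncard ≤ s) ∧
      (x = ∑ i, lam i • u i) ∧
      (∑ i, lam i * ∑ j, ‖u i j‖ ^ 2 ≤ α ^ p * ∑ j, ‖x j‖ ^ (2 - p)) := by
  have hαp : (0:ℝ) < α ^ p := Real.rpow_pos_of_pos hα p
  set w : Fin M → ℝ := fun j => ‖x j‖ ^ p / α ^ p with hw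
  have hw0 : ∀ j, 0 ≤ w j := fun j => by
    positivity
  have hw1 : ∀ j, w j ≤ 1 := by
    intro j
    rw [hw, div_le_one hαp]
    exact Real.rpow_le_rpow (norm_nonneg _) (h2 j) (le_of_lt hp0)
  have hwsum : ∑ j, w j ≤ (s : ℝ) := by
    rw [hw, ← Finset.sum_div, div_le_iff₀ hαp]
    exact h1
  obtain ⟨lam, hnn, hsum1, hcard, hcov⟩ :=
    hyp_main M s ((Finset.univ.filter fun j => w j ≠ 0 ∧ w j ≠ 1).card) w le_rfl hw0 hw1 hwsum
  -- the blocks u S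
  set u : Finset (Fin M) → (Fin M → EuclideanSpace ℝ (Fin d)) :=
    fun S j => if j ∈ S then (w j)⁻¹ • x j else 0 with hu
  -- w j = 0 implies x j = 0
  have hwpos : ∀ j, x j ≠ 0 → 0 < w j := by
    intro j hj
    have hx : (0:ℝ) < ‖x j‖ := norm_pos_iff.mpr hj
    simp only [hw]
    positivity
  have hwx : ∀ j, w j = 0 → x j = 0 := by
    intro j hj
    by_contra hx
    exact (hwpos j hx).ne' hj
  set P : Finset (Finset (Fin M)) := Finset.univ.filter fun S => lam S ≠ 0 with hP
  have hmemP : ∀ T ∈ P, lam T ≠ 0 := by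
    intro T hT
    rw [hP] at hT
    exact (Finset.mem_filter.mp hT).2
  refine ⟨P.card, fun i => lam ((P.equivFin.symm i : P) : Finset (Fin M)),
    fun i => u ((P.equivFin.symm i : P) : Finset (Fin M)), ?_, ?_, ?_, ?_, ?_⟩
  · intro i
    dsimp only
    exact lt_of_le_of_ne (hnn _) (Ne.symm (hmemP _ (P.equivFin.symm i).2))
  · dsimp only
    rw [Equiv.sum_comp P.equivFin.symm (fun a : P => lam (a : Finset (Fin M)))]
    rw [Finset.sum_coe_sort P lam]
    rw [hP, Finset.sum_filter_ne_zero]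
    exact hsum1
  · intro i
    dsimp only
    have hmem := hmemP _ (P.equivFin.symm i).2
    set S := ((P.equivFin.symm i : P) : Finset (Fin M))
    have hsub : {j | u S j ≠ 0} ⊆ (S : Set (Fin M)) := by
      intro j hj
      by_contra h
      apply hj
      show u S j = 0
      simp only [hu]
      rw [if_neg (by simpa using h)]
    calc {j | u S j ≠ 0}.ncard ≤ (S : Set (Fin M)).ncard :=
          Set.ncard_le_ncard hsub S.finite_toSet
      _ = S.card := Set.ncard_coe_finset S
      _ ≤ s := hcard S hmem
  · funext j
    rw [Finset.sum_apply]
    dsimp only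
    have step1 : ∀ i : Fin P.card,
        (lam ((P.equivFin.symm i : P) : Finset (Fin M)) •
          u ((P.equivFin.symm i : P) : Finset (Fin M))) j
        = (if j ∈ ((P.equivFin.symm i : P) : Finset (Fin M))
            then lam ((P.equivFin.symm i : P) : Finset (Fin M)) else 0) • ((w j)⁻¹ • x j) := by
      intro i
      simp only [Pi.smul_apply, hu]
      split_ifs <;> simp
    rw [Finset.sum_congr rfl fun i _ => step1 i, ← Finset.sum_smul]
    have step2 : (∑ i : Fin P.card, if j ∈ ((P.equivFin.symm i : P) : Finset (Fin M))
            then lam ((P.equivFin.symm i : P) : Finset (Fin M)) else 0) = w j := by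
      rw [Equiv.sum_comp P.equivFin.symm
        (fun a : P => if j ∈ (a : Finset (Fin M)) then lam (a : Finset (Fin M)) else 0)]
      rw [Finset.sum_coe_sort P (fun S => if j ∈ S then lam S else 0)]
      rw [← hcov j]
      rw [hP]
      apply Finset.sum_subset (Finset.filter_subset _ _)
      intro S _ hS
      simp only [Finset.mem_filter, Finset.mem_univ, true_and, not_not] at hS
      simp [hS]
    rw [step2]
    by_cases hwj : w j = 0
    · rw [hwx j hwj, hwj]
      simp
    · rw [smul_smul, mul_inv_cancel₀ hwj, one_smul]
  · -- energy bound
    have hterm : ∀ (S : Finset (Fin M)) (j : Fin M),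
        ‖u S j‖ ^ 2 = (if j ∈ S then ((w j)⁻¹)^2 * ‖x j‖^2 else 0) := by
      intro S j
      simp only [hu]
      split_ifs with h
      · rw [norm_smul, Real.norm_eq_abs, abs_of_nonneg (inv_nonneg.mpr (hw0 j)), mul_pow]
      · simp
    have hptw : ∀ j, w j * (((w j)⁻¹)^2 * ‖x j‖^2) = α ^ p * ‖x j‖ ^ (2 - p) := by
      intro j
      by_cases hwj : w j = 0
      · rw [hwx j hwj, hwj]
        simp [Real.zero_rpow (by linarith : (2:ℝ) - p ≠ 0)]
      · have hxj : (0:ℝ) < ‖x j‖ := by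
          rcases lt_or_eq_of_le (norm_nonneg (x j)) with h | h
          · exact h
          · refine absurd ?_ hwj
            simp only [hw, ← h]
            try rw [Real.zero_rpow (ne_of_gt hp0), zero_div]
        have hxp : (0:ℝ) < ‖x j‖ ^ p := Real.rpow_pos_of_pos hxj p
        have h2p : ‖x j‖ ^ (2 - p) = ‖x j‖ ^ (2:ℝ) / ‖x j‖ ^ p := by
          rw [← Real.rpow_sub hxj]
        have hsq : ‖x j‖ ^ (2:ℝ) = ‖x j‖ ^ 2 := by
          rw [show ((2:ℝ)) = ((2:ℕ):ℝ) by norm_num, Real.rpow_natCast]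
        rw [h2p, hsq]
        simp only [hw]
        field_simp
    -- evaluate the LHS
    have key : ∑ i : Fin P.card, lam ((P.equivFin.symm i : P) : Finset (Fin M)) *
        ∑ j, ‖u ((P.equivFin.symm i : P) : Finset (Fin M)) j‖ ^ 2
        = α ^ p * ∑ j, ‖x j‖ ^ (2 - p) := by
      rw [Equiv.sum_comp P.equivFin.symm
        (fun a : P => lam (a : Finset (Fin M)) * ∑ j, ‖u (a : Finset (Fin M)) j‖ ^ 2)]
      rw [Finset.sum_coe_sort P (fun S => lam S * ∑ j, ‖u S j‖ ^ 2)]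
      have hfull : ∑ S ∈ P, lam S * ∑ j, ‖u S j‖ ^ 2
          = ∑ S : Finset (Fin M), lam S * ∑ j, ‖u S j‖ ^ 2 := by
        rw [hP]
        apply Finset.sum_subset (Finset.filter_subset _ _)
        intro S _ hS
        simp only [Finset.mem_filter, Finset.mem_univ, true_and, not_not] at hS
        simp [hS]
      rw [hfull]
      have swap : ∑ S : Finset (Fin M), lam S * ∑ j, ‖u S j‖ ^ 2
          = ∑ j, ∑ S : Finset (Fin M), lam S * ‖u S j‖ ^ 2 := by
        rw [Finset.sum_comm]
        exact Finset.sum_congr rfl fun S _ => Finset.mul_sum _ _ _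
      rw [swap]
      have inner : ∀ j, ∑ S : Finset (Fin M), lam S * ‖u S j‖ ^ 2
          = w j * (((w j)⁻¹)^2 * ‖x j‖^2) := by
        intro j
        have : ∀ S : Finset (Fin M), lam S * ‖u S j‖ ^ 2
            = (if j ∈ S then lam S else 0) * (((w j)⁻¹)^2 * ‖x j‖^2) := by
          intro S
          rw [hterm S j]
          split_ifs <;> ring
        rw [Finset.sum_congr rfl fun S _ => this S, ← Finset.sum_mul, hcov j]
      rw [Finset.sum_congr rfl fun j _ => inner j,
        Finset.sum_congr rfl fun j _ => hptw j, ← Finset.mul_sum]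
    dsimp only
    exact le_of_eq key
end

section
/- Let $\Phi$ be a linear map from $\mathbb{R}^N$ to $\mathbb{R}^n$, let $p \in (0,1]$, let $\beta_1, \ldots, \beta_K \in \mathbb{R}^N$ and $\lambda_1, \ldots, \lambda_K \geq 0$ with $\sum_i \lambda_i = 1$. Then the polarization-type identity holds: $\sum_i \lambda_i \left\|\Phi\left(\sum_j \lambda_j \beta_j - \frac{p}{2}\beta_i\right)\right\|_2^2 + \frac{1-p}{2}\sum_{i,j}\lambda_i\lambda_j\|\Phi(\beta_i - \beta_j)\|_2^2 = \left(1 - \frac{p}{2}\right)^2 \sum_i \lambda_i \|\Phi \beta_i\|_2^2.$ -/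
open Finset RealInnerProductSpace

/-- Polarization-type identity for squared norms of images under a linear map. -/
theorem polarization_identity (N n K : ℕ) (p : ℝ) (hp0 : 0 < p) (hp1 : p ≤ 1)
    (Φ : EuclideanSpace ℝ (Fin N) →ₗ[ℝ] EuclideanSpace ℝ (Fin n))
    (β : Fin K → EuclideanSpace ℝ (Fin N)) (lam : Fin K → ℝ)
    (hlam : ∀ i, 0 ≤ lam i) (hsum : ∑ i, lam i = 1) :
    ∑ i, lam i * ‖Φ ((∑ j, lam j • β j) - (p / 2) • β i)‖ ^ 2
      + (1 - p) / 2 * ∑ i, ∑ j, lam i * lam j * ‖Φ (β i - β j)‖ ^ 2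
      = (1 - p / 2) ^ 2 * ∑ i, lam i * ‖Φ (β i)‖ ^ 2 := by
  set v : Fin K → EuclideanSpace ℝ (Fin n) := fun i => Φ (β i) with hv
  set S : EuclideanSpace ℝ (Fin n) := ∑ j, lam j • v j with hS
  set Q : ℝ := ∑ i, lam i * ‖v i‖ ^ 2 with hQ
  have hΦS : Φ (∑ j, lam j • β j) = S := by
    simp [hS, map_sum, map_smul, hv]
  have hA : ∑ i, lam i * (⟪S, v i⟫ : ℝ) = ‖S‖ ^ 2 := by
    rw [← real_inner_self_eq_norm_sq]
    nth_rewrite 3 [hS]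
    rw [inner_sum]
    exact Finset.sum_congr rfl fun i _ => (real_inner_smul_right _ _ _).symm
  have hB : ∑ i, ∑ j, lam i * lam j * (⟪v i, v j⟫ : ℝ) = ‖S‖ ^ 2 := by
    rw [← real_inner_self_eq_norm_sq, hS, sum_inner]
    refine Finset.sum_congr rfl fun i _ => ?_
    rw [real_inner_smul_left, inner_sum, Finset.mul_sum]
    refine Finset.sum_congr rfl fun j _ => ?_
    rw [real_inner_smul_right]; ring
  have h1 : ∑ i, lam i * ‖Φ ((∑ j, lam j • β j) - (p / 2) • β i)‖ ^ 2
      = ‖S‖ ^ 2 - p * ‖S‖ ^ 2 + (p / 2) ^ 2 * Q := by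
    have step : ∀ i, lam i * ‖Φ ((∑ j, lam j • β j) - (p / 2) • β i)‖ ^ 2
        = lam i * ‖S‖ ^ 2 - p * (lam i * (⟪S, v i⟫ : ℝ)) + (p / 2) ^ 2 * (lam i * ‖v i‖ ^ 2) := by
      intro i
      have : Φ ((∑ j, lam j • β j) - (p / 2) • β i) = S - (p / 2) • v i := by
        rw [map_sub, map_smul, hΦS]
      rw [this, norm_sub_sq_real, real_inner_smul_right, norm_smul, Real.norm_eq_abs,
        abs_of_pos (by linarith : (0:ℝ) < p / 2)]
      ring
    rw [Finset.sum_congr rfl fun i _ => step i, Finset.sum_add_distrib, Finset.sum_sub_distrib,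
      ← Finset.sum_mul, ← Finset.mul_sum, ← Finset.mul_sum, hsum, hA, hQ]
    ring
  have h2 : ∑ i, ∑ j, lam i * lam j * ‖Φ (β i - β j)‖ ^ 2 = 2 * Q - 2 * ‖S‖ ^ 2 := by
    have step : ∀ i j, lam i * lam j * ‖Φ (β i - β j)‖ ^ 2
        = lam j * (lam i * ‖v i‖ ^ 2) + lam i * (lam j * ‖v j‖ ^ 2)
          - 2 * (lam i * lam j * (⟪v i, v j⟫ : ℝ)) := by
      intro i j
      have : Φ (β i - β j) = v i - v j := by rw [map_sub]
      rw [this, norm_sub_sq_real]; ring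
    calc ∑ i, ∑ j, lam i * lam j * ‖Φ (β i - β j)‖ ^ 2
        = ∑ i, ∑ j, (lam j * (lam i * ‖v i‖ ^ 2) + lam i * (lam j * ‖v j‖ ^ 2)
            - 2 * (lam i * lam j * (⟪v i, v j⟫ : ℝ))) := by
          exact Finset.sum_congr rfl fun i _ => Finset.sum_congr rfl fun j _ => step i j
      _ = ∑ i, (lam i * ‖v i‖ ^ 2 + lam i * Q
            - 2 * ∑ j, lam i * lam j * (⟪v i, v j⟫ : ℝ)) := by
          refine Finset.sum_congr rfl fun i _ => ?_
          rw [Finset.sum_sub_distrib, Finset.sum_add_distrib, ← Finset.sum_mul, hsum,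
            ← Finset.mul_sum, ← Finset.mul_sum, ← hQ, one_mul]
      _ = 2 * Q - 2 * ‖S‖ ^ 2 := by
          rw [Finset.sum_sub_distrib, Finset.sum_add_distrib, ← Finset.sum_mul, hsum,
            ← Finset.mul_sum, hB, ← hQ, one_mul]
          ring
  rw [h1, h2]
  ring
end

section
/- Fix $t \in (1,2]$ and $p \in (0,1]$. The function $g(\mu) = \frac{p}{2}\mu^{2/p} + \mu - \frac{2-p}{2(t-1)}$ has a unique positive root $\mu^*$, and this root satisfies $\mu^* \in \left[\frac{\sqrt{1+2p-p^2}-1}{p},\; \frac{1-(t-\sqrt{t^2-t})\,p}{t-1}\right]$. -/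
lemma hUV_aux (t p s : ℝ) (ht1 : 1 < t) (ht2 : t ≤ 2) (hp0 : 0 < p) (hp1 : p ≤ 1)
    (hst : t - 1 < s) :
    1 + p * ((s - t + 1) / (t - 1) - 1) ≤ (1 - (t - s) * p) / (t - 1) := by
  have ht0 : 0 < t - 1 := by linarith
  rw [le_div_iff₀ ht0]
  have h1 : 0 ≤ (2 - t) * (1 - p) := mul_nonneg (by linarith) (by linarith)
  have h2 : p * ((s - t + 1) / (t - 1)) * (t - 1) = p * (s - t + 1) := by
    field_simp
  nlinarith [h2]

lemma hVsq_aux (t s : ℝ) (ht1 : 1 < t) (hs2 : s ^ 2 = t ^ 2 - t) :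
    ((s - t + 1) / (t - 1)) ^ 2 = (2 * (t - s) - 1) / (t - 1) := by
  have ht0 : (t - 1) ≠ 0 := by intro h; rw [sub_eq_zero] at h; linarith
  field_simp
  ring_nf
  nlinarith [hs2]

lemma hU0_aux (t p s : ℝ) (hp0 : 0 < p) (hp1 : p ≤ 1) (hst : t - 1 < s) :
    0 < 1 - (t - s) * p := by
  rcases le_or_gt (t - s) 0 with h | h
  · nlinarith [mul_nonpos_of_nonpos_of_nonneg h hp0.le]
  · nlinarith [mul_le_of_le_one_right h.le hp1]

set_option maxHeartbeats 1000000 in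
/-- Existence, uniqueness, and two-sided bounds for the positive root of
`g(μ) = (p/2) μ^(2/p) + μ - (2-p)/(2(t-1))`. -/
theorem unique_positive_root (t p : ℝ) (ht1 : 1 < t) (ht2 : t ≤ 2)
    (hp0 : 0 < p) (hp1 : p ≤ 1) :
    ∃ μ : ℝ, (0 < μ ∧ p / 2 * μ ^ (2 / p) + μ - (2 - p) / (2 * (t - 1)) = 0) ∧
      (∀ ν : ℝ, 0 < ν → p / 2 * ν ^ (2 / p) + ν - (2 - p) / (2 * (t - 1)) = 0 → ν = μ) ∧
      (Real.sqrt (1 + 2 * p - p ^ 2) - 1) / p ≤ μ ∧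
      μ ≤ (1 - (t - Real.sqrt (t ^ 2 - t)) * p) / (t - 1) := by
  have ht0 : 0 < t - 1 := by linarith
  set C : ℝ := (2 - p) / (2 * (t - 1)) with hCdef
  set g : ℝ → ℝ := fun x => p / 2 * x ^ (2 / p) + x - C with hg
  have he : (0:ℝ) < 2 / p := by positivity
  -- strict monotonicity on positives
  have hmono : ∀ x y : ℝ, 0 ≤ x → x < y → g x < g y := by
    intro x y hx hxy
    have h1 : x ^ (2/p) < y ^ (2/p) := Real.rpow_lt_rpow hx hxy he
    have h2 : p / 2 * x ^ (2/p) < p / 2 * y ^ (2/p) := by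
      apply mul_lt_mul_of_pos_left h1; positivity
    simp only [hg]; linarith
  -- lower bound point L
  set a : ℝ := Real.sqrt (1 + 2 * p - p ^ 2) with hadef
  have hDnn : (0:ℝ) ≤ 1 + 2 * p - p ^ 2 := by nlinarith
  have ha2 : a ^ 2 = 1 + 2 * p - p ^ 2 := Real.sq_sqrt hDnn
  have ha0 : 0 ≤ a := Real.sqrt_nonneg _
  have ha1 : 1 < a := by nlinarith [mul_pos hp0 (by linarith : (0:ℝ) < 2 - p)]
  have hap : a ≤ 1 + p := by nlinarith
  set L : ℝ := (a - 1) / p with hLdef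
  have hL0 : 0 < L := by apply div_pos; linarith; exact hp0
  have hL1 : L ≤ 1 := by rw [div_le_one hp0]; linarith
  -- g L ≤ 0
  have hLpow : L ^ (2/p) ≤ L ^ (2:ℝ) := by
    apply Real.rpow_le_rpow_of_exponent_ge hL0 hL1
    rw [le_div_iff₀ hp0]; linarith
  have hL2 : L ^ (2:ℝ) = L ^ (2:ℕ) := by
    rw [show (2:ℝ) = ((2:ℕ):ℝ) by norm_num, Real.rpow_natCast]
  have hkey : p / 2 * L ^ (2:ℕ) + L = (2 - p) / 2 := by
    have hp' : p ≠ 0 := ne_of_gt hp0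
    rw [hLdef]
    field_simp
    nlinarith [ha2]
  have hC2 : (2 - p) / 2 ≤ C := by
    rw [hCdef, div_le_div_iff₀ (by norm_num) (by linarith)]
    nlinarith
  have hgL : g L ≤ 0 := by
    simp only [hg]
    have : p / 2 * L ^ (2/p) ≤ p / 2 * L ^ (2:ℝ) := by
      apply mul_le_mul_of_nonneg_left hLpow; positivity
    rw [hL2] at this; linarith
  -- upper bound point U
  set s : ℝ := Real.sqrt (t ^ 2 - t) with hsdef
  have hs0 : 0 ≤ s := Real.sqrt_nonneg _
  have hs2 : s ^ 2 = t ^ 2 - t := Real.sq_sqrt (by nlinarith)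
  have hst : t - 1 < s := by nlinarith [sq_nonneg (s - (t-1))]
  set U : ℝ := (1 - (t - s) * p) / (t - 1) with hUdef
  have hU0 : 0 < U := div_pos (hU0_aux t p s hp0 hp1 hst) ht0
  set V : ℝ := (s - t + 1) / (t - 1) with hVdef
  have hV0 : 0 < V := div_pos (by linarith) ht0
  have hVsq : V ^ 2 = (2 * (t - s) - 1) / (t - 1) := hVsq_aux t s ht1 hs2
  -- Bernoulli : V ^ p ≤ 1 + p * (V - 1) ≤ U
  have hBern : V ^ p ≤ 1 + p * (V - 1) := by
    have := rpow_one_add_le_one_add_mul_self (s := V - 1) (by linarith) hp0.le hp1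
    simpa using this
  have hVpU : V ^ p ≤ U := le_trans hBern (hUV_aux t p s ht1 ht2 hp0 hp1 hst)
  have hVU : V ≤ U ^ (1/p) := by
    have h1 : (V ^ p) ^ (1/p) ≤ U ^ (1/p) :=
      Real.rpow_le_rpow (Real.rpow_nonneg hV0.le p) hVpU (by positivity)
    rwa [← Real.rpow_mul hV0.le, mul_one_div, div_self (ne_of_gt hp0),
      Real.rpow_one] at h1
  have hV2U : V ^ (2:ℕ) ≤ U ^ (2/p) := by
    have h1 : V ^ (2:ℕ) ≤ (U ^ (1/p)) ^ (2:ℕ) := by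
      apply pow_le_pow_left₀ hV0.le hVU
    have h2 : (U ^ (1/p)) ^ (2:ℕ) = U ^ (2/p) := by
      rw [← Real.rpow_natCast (U ^ (1/p)), ← Real.rpow_mul hU0.le]
      congr 1
      push_cast
      ring
    rwa [h2] at h1
  have hgU : 0 ≤ g U := by
    simp only [hg]
    have hCU : C - U = p / 2 * V ^ (2:ℕ) := by
      rw [hVsq, hCdef, hUdef]
      field_simp
      ring
    have : p / 2 * V ^ (2:ℕ) ≤ p / 2 * U ^ (2/p) :=
      mul_le_mul_of_nonneg_left hV2U (by positivity)
    linarith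
  have hLU : L ≤ U := by
    by_contra h
    push_neg at h
    exact absurd (hmono U L (le_of_lt hU0) h) (by linarith)
  -- IVT
  have hcont : ContinuousOn g (Set.Icc L U) := by
    apply ContinuousOn.sub _ continuousOn_const
    apply ContinuousOn.add _ continuousOn_id
    exact (continuousOn_const.mul ((Real.continuous_rpow_const he.le).continuousOn))
  have hIVT := intermediate_value_Icc hLU hcont
  obtain ⟨μ, hμmem, hμ⟩ := hIVT ⟨hgL, hgU⟩
  have hμ0 : 0 < μ := lt_of_lt_of_le hL0 hμmem.1
  have hμ' : p / 2 * μ ^ (2 / p) + μ - C = 0 := hμ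
  refine ⟨μ, ⟨hμ0, hμ'⟩, ?_, hμmem.1, hμmem.2⟩
  intro ν hν hνroot
  rcases lt_trichotomy ν μ with h | h | h
  · have := hmono ν μ hν.le h
    simp only [hg] at this
    linarith
  · exact h
  · have := hmono μ ν hμ0.le h
    simp only [hg] at this
    linarith
end

section
/- Fix $p \in (0,1]$. For $t \in (1,2]$, let $\mu(t)$ be the unique positive solution of $\frac{p}{2}\mu^{2/p} + \mu = \frac{2-p}{2(t-1)}$ and define $\phi(t,p) = \frac{\mu(t)}{\frac{2-p}{t-1} - \mu(t)}$. Then $\phi(t,p)$ is strictly increasing in $t$ on $(1,2]$. -/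
/-- Strict monotonicity in `t` of the block-RIP threshold `φ(t,p) = μ(t)/((2-p)/(t-1) - μ(t))`. -/
theorem phi_strict_mono (p : ℝ) (hp0 : 0 < p) (hp1 : p ≤ 1)
    (t1 t2 μ1 μ2 : ℝ) (ht1 : 1 < t1) (h12 : t1 < t2) (ht2 : t2 ≤ 2)
    (hμ1 : 0 < μ1) (hroot1 : p / 2 * μ1 ^ (2 / p) + μ1 = (2 - p) / (2 * (t1 - 1)))
    (hμ2 : 0 < μ2) (hroot2 : p / 2 * μ2 ^ (2 / p) + μ2 = (2 - p) / (2 * (t2 - 1))) :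
    μ1 / ((2 - p) / (t1 - 1) - μ1) < μ2 / ((2 - p) / (t2 - 1) - μ2) := by
  have hc : (0:ℝ) < 2 - p := by linarith
  have he : (1:ℝ) < 2 / p := by
    rw [lt_div_iff₀ hp0]; linarith
  have hd1 : (2 - p) / (t1 - 1) - μ1 = p * μ1 ^ (2/p) + μ1 := by
    have hne : t1 - 1 ≠ 0 := by intro h; linarith
    have h : (2 - p) / (t1 - 1) = 2 * ((2 - p) / (2 * (t1 - 1))) := by
      field_simp
    rw [h, ← hroot1]; ring
  have hd2 : (2 - p) / (t2 - 1) - μ2 = p * μ2 ^ (2/p) + μ2 := by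
    have hne : t2 - 1 ≠ 0 := by intro h; linarith
    have h : (2 - p) / (t2 - 1) = 2 * ((2 - p) / (2 * (t2 - 1))) := by
      field_simp
    rw [h, ← hroot2]; ring
  have hr1 : (0:ℝ) < μ1 ^ (2/p) := Real.rpow_pos_of_pos hμ1 _
  have hr2 : (0:ℝ) < μ2 ^ (2/p) := Real.rpow_pos_of_pos hμ2 _
  have hpos1 : 0 < p * μ1 ^ (2/p) + μ1 := by positivity
  have hpos2 : 0 < p * μ2 ^ (2/p) + μ2 := by positivity
  have hlt : μ2 < μ1 := by
    by_contra h
    push_neg at h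
    have h1 : μ1 ^ (2/p) ≤ μ2 ^ (2/p) := Real.rpow_le_rpow hμ1.le h (by positivity)
    have hne : (2 - p) / (2 * (t2 - 1)) < (2 - p) / (2 * (t1 - 1)) :=
      div_lt_div_of_pos_left hc (by linarith) (by linarith)
    nlinarith
  rw [hd1, hd2, div_lt_div_iff₀ hpos1 hpos2]
  have key : μ1 * μ2 ^ (2/p) < μ2 * μ1 ^ (2/p) := by
    have e1 : μ1 ^ (2/p) = μ1 * μ1 ^ (2/p - 1) := by
      have h := Real.rpow_add hμ1 1 (2/p - 1)
      rw [Real.rpow_one] at h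
      rw [← h]; norm_num
    have e2 : μ2 ^ (2/p) = μ2 * μ2 ^ (2/p - 1) := by
      have h := Real.rpow_add hμ2 1 (2/p - 1)
      rw [Real.rpow_one] at h
      rw [← h]; norm_num
    have hmono : μ2 ^ (2/p - 1) < μ1 ^ (2/p - 1) :=
      Real.rpow_lt_rpow hμ2.le hlt (by linarith)
    rw [e1, e2]
    nlinarith [mul_pos hμ1 hμ2]
  nlinarith [mul_lt_mul_of_pos_left key hp0]
end
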